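/- arXiv:math/9304206 — 4 statements merged into one kernel-verified Lean document; each statement's English description precedes it below -/
import Mathlib

section
/- Let E be a Banach space, (P_n) a uniformly bounded sequence of linear projections on E, (w_k) a sequence in the unit ball of E' which is precisely norming (for every x there exists k with ‖x‖ = |w_k(x)|). Let (ε_k), (δ_k) be sequences in (0,1) converging to 0 with (1+ε_k)(1−2δ_k) > 1 for all k, and let (n_k) satisfy ‖(1−P_n)'w_k‖ ≤ δ_k for all n ≥ n_k. Then the seminorm |||x||| = sup_k (1+ε_k)·max_{1≤n≤n_k} |⟨P_n x, w_k⟩| satisfies |||x||| ≥ (1+ε_k)(1−δ_k)‖x‖ > ‖x‖ for all x ≠ 0, where k is chosen with ‖x‖ = |w_k(x)|; in particular |||·||| is an equivalent norm on E. -/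
open Filter Topology

/-- Given a uniformly bounded sequence of projections `P n` on a Banach
space `E`, a precisely norming sequence `(w k)` in the unit ball of the dual, sequences
`ε, δ` in `(0,1)` tending to `0` with `(1+ε k)(1-2δ k) > 1`, and `n k` with
`‖w k ∘ (1 - P n)‖ ≤ δ k` for `n ≥ nk k`, the seminorm
`T x = sup_k (1+ε k)·max_{1 ≤ n ≤ nk k} |⟨P n x, w k⟩|` satisfies
`T x ≥ (1+ε k)(1-δ k)‖x‖ > ‖x‖` whenever `x ≠ 0` and `‖x‖ = |w k x|`; in particular it
is an equivalent norm. -/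
theorem seminorm_lower_bound_equiv_norm {E : Type*} [NormedAddCommGroup E]
    [NormedSpace ℝ E] [CompleteSpace E]
    (P : ℕ → E →L[ℝ] E) (Cb : ℝ) (hPbdd : ∀ n, ‖P n‖ ≤ Cb)
    (hproj : ∀ n, (P n).comp (P n) = P n)
    (w : ℕ → E →L[ℝ] ℝ) (hwball : ∀ k, ‖w k‖ ≤ 1)
    (hpn : ∀ x : E, ∃ k, ‖x‖ = |w k x|)
    (ε δ : ℕ → ℝ)
    (hε : ∀ k, ε k ∈ Set.Ioo (0 : ℝ) 1) (hδ : ∀ k, δ k ∈ Set.Ioo (0 : ℝ) 1)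
    (hε0 : Tendsto ε atTop (𝓝 0)) (hδ0 : Tendsto δ atTop (𝓝 0))
    (hεδ : ∀ k, (1 + ε k) * (1 - 2 * δ k) > 1)
    (nk : ℕ → ℕ) (hnk1 : ∀ k, 1 ≤ nk k)
    (hnk : ∀ k, ∀ n ≥ nk k, ‖(w k).comp (ContinuousLinearMap.id ℝ E - P n)‖ ≤ δ k)
    (T : E → ℝ)
    (hT : ∀ x, T x = ⨆ k : ℕ, (1 + ε k) * ⨆ n ∈ Finset.Icc 1 (nk k), |w k (P n x)|) :
    (∀ x : E, x ≠ 0 → ∀ k, ‖x‖ = |w k x| →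
        T x ≥ (1 + ε k) * (1 - δ k) * ‖x‖ ∧ (1 + ε k) * (1 - δ k) * ‖x‖ > ‖x‖) ∧
    (∃ c > 0, ∃ C : ℝ, ∀ x : E, c * ‖x‖ ≤ T x ∧ T x ≤ C * ‖x‖) := by

  have hCb0 : 0 ≤ Cb := le_trans (norm_nonneg _) (hPbdd 0)
  have hg_bound : ∀ (x : E) (k n : ℕ), |w k (P n x)| ≤ Cb * ‖x‖ := by
    intro x k n
    calc |w k (P n x)| ≤ ‖w k‖ * ‖P n x‖ := (w k).le_opNorm _
      _ ≤ 1 * (Cb * ‖x‖) := by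
          refine mul_le_mul (hwball k) ?_ (norm_nonneg _) zero_le_one
          exact le_trans ((P n).le_opNorm x)
            (mul_le_mul_of_nonneg_right (hPbdd n) (norm_nonneg x))
      _ = Cb * ‖x‖ := one_mul _
  have hMnn : ∀ x : E, 0 ≤ Cb * ‖x‖ := fun x => mul_nonneg hCb0 (norm_nonneg x)
  have hinner_bound : ∀ (x : E) (k n : ℕ),
      (⨆ _ : n ∈ Finset.Icc 1 (nk k), |w k (P n x)|) ≤ Cb * ‖x‖ := by
    intro x k n
    exact Real.iSup_le (fun _ => hg_bound x k n) (hMnn x)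
  have hS_bdd : ∀ (x : E) (k : ℕ), BddAbove (Set.range fun n =>
      ⨆ _ : n ∈ Finset.Icc 1 (nk k), |w k (P n x)|) :=
    fun x k => ⟨Cb * ‖x‖, by rintro _ ⟨n, rfl⟩; exact hinner_bound x k n⟩
  have hS_le : ∀ x k, (⨆ n ∈ Finset.Icc 1 (nk k), |w k (P n x)|) ≤ Cb * ‖x‖ :=
    fun x k => Real.iSup_le (fun n => hinner_bound x k n) (hMnn x)
  have hS_ge : ∀ x k, |w k (P (nk k) x)| ≤ ⨆ n ∈ Finset.Icc 1 (nk k), |w k (P n x)| := by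
    intro x k
    have hmem : nk k ∈ Finset.Icc 1 (nk k) := Finset.mem_Icc.mpr ⟨hnk1 k, le_refl _⟩
    have h := le_ciSup (hS_bdd x k) (nk k)
    rwa [ciSup_pos hmem] at h
  have hS_nonneg : ∀ x k, 0 ≤ ⨆ n ∈ Finset.Icc 1 (nk k), |w k (P n x)| :=
    fun x k => le_trans (abs_nonneg _) (hS_ge x k)
  have hA_le : ∀ x k,
      (1 + ε k) * (⨆ n ∈ Finset.Icc 1 (nk k), |w k (P n x)|) ≤ 2 * (Cb * ‖x‖) := by
    intro x k
    have hε1 : 1 + ε k ≤ 2 := by have := (hε k).2; linarith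
    calc (1 + ε k) * (⨆ n ∈ Finset.Icc 1 (nk k), |w k (P n x)|)
        ≤ 2 * (⨆ n ∈ Finset.Icc 1 (nk k), |w k (P n x)|) :=
          mul_le_mul_of_nonneg_right hε1 (hS_nonneg x k)
      _ ≤ 2 * (Cb * ‖x‖) := by
          have := hS_le x k; linarith
  have hT_bdd : ∀ x : E, BddAbove (Set.range fun k =>
      (1 + ε k) * ⨆ n ∈ Finset.Icc 1 (nk k), |w k (P n x)|) :=
    fun x => ⟨2 * (Cb * ‖x‖), by rintro _ ⟨k, rfl⟩; exact hA_le x k⟩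
  have hT_ge : ∀ (x : E) (k : ℕ),
      (1 + ε k) * (⨆ n ∈ Finset.Icc 1 (nk k), |w k (P n x)|) ≤ T x := by
    intro x k
    rw [hT x]
    exact le_ciSup (hT_bdd x) k
  have hT_le : ∀ x : E, T x ≤ 2 * Cb * ‖x‖ := by
    intro x
    rw [hT x, mul_assoc]
    exact Real.iSup_le (fun k => hA_le x k) (by positivity)
  -- key lower bound
  have hkey : ∀ (x : E) (k : ℕ), ‖x‖ = |w k x| →
      (1 + ε k) * (1 - δ k) * ‖x‖ ≤ T x := by
    intro x k hxk
    have h1 : |w k (x - P (nk k) x)| ≤ δ k * ‖x‖ := by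
      have h := ((w k).comp (ContinuousLinearMap.id ℝ E - P (nk k))).le_opNorm x
      have heq : ((w k).comp (ContinuousLinearMap.id ℝ E - P (nk k))) x
          = w k (x - P (nk k) x) := by simp
      rw [heq] at h
      calc |w k (x - P (nk k) x)| = ‖w k (x - P (nk k) x)‖ := (Real.norm_eq_abs _).symm
        _ ≤ ‖(w k).comp (ContinuousLinearMap.id ℝ E - P (nk k))‖ * ‖x‖ := h
        _ ≤ δ k * ‖x‖ :=
            mul_le_mul_of_nonneg_right (hnk k (nk k) le_rfl) (norm_nonneg x)
    have h2 : (1 - δ k) * ‖x‖ ≤ |w k (P (nk k) x)| := by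
      have hsplit : w k x = w k (P (nk k) x) + w k (x - P (nk k) x) := by
        rw [← map_add]; congr 1; abel
      have habs : |w k x| ≤ |w k (P (nk k) x)| + |w k (x - P (nk k) x)| := by
        rw [hsplit]; exact abs_add_le _ _
      have := hxk
      nlinarith [abs_nonneg (w k x)]
    have h3 : (1 - δ k) * ‖x‖ ≤ ⨆ n ∈ Finset.Icc 1 (nk k), |w k (P n x)| :=
      le_trans h2 (hS_ge x k)
    have hε0' : (0:ℝ) ≤ 1 + ε k := by have := (hε k).1; linarith
    calc (1 + ε k) * (1 - δ k) * ‖x‖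
        = (1 + ε k) * ((1 - δ k) * ‖x‖) := by ring
      _ ≤ (1 + ε k) * (⨆ n ∈ Finset.Icc 1 (nk k), |w k (P n x)|) :=
          mul_le_mul_of_nonneg_left h3 hε0'
      _ ≤ T x := hT_ge x k
  have hgt : ∀ (x : E), x ≠ 0 → ∀ k, (1 + ε k) * (1 - δ k) * ‖x‖ > ‖x‖ := by
    intro x hx k
    have hxpos : 0 < ‖x‖ := norm_pos_iff.mpr hx
    have h1 := hεδ k
    have hδ1 := (hδ k).1
    have hε1 := (hε k).1
    nlinarith
  constructor
  · intro x hx k hxk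
    exact ⟨hkey x k hxk, hgt x hx k⟩
  · refine ⟨1, one_pos, 2 * Cb, fun x => ⟨?_, hT_le x⟩⟩
    rcases eq_or_ne x 0 with rfl | hx
    · simp only [norm_zero, mul_zero]
      exact le_trans (mul_nonneg (by have := (hε 0).1; linarith) (hS_nonneg 0 0)) (hT_ge 0 0)
    · obtain ⟨k, hk⟩ := hpn x
      have := hkey x k hk
      have := hgt x hx k
      linarith [one_mul ‖x‖]
end

section
/- Let (b_n)_{n≥0} be a decreasing sequence of strictly positive reals with sup_{m,n} (b_{m+n}/b_n)·K^m < ∞ for all K < ∞, and let M be the piecewise linear Orlicz function with M(0)=0 and M'(t) = b_n on (2^{-n-1}, 2^{-n}) for n ≥ 0 (M' = b_0 beyond 1/2). Then for every q < ∞, sup{ M(λt)/(M(λ)·t^q) : 0 < λ, t ≤ 1 } < ∞. -/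
open Filter Topology

/-- An Orlicz function: continuous, non-decreasing, convex on `[0,∞)`, vanishing at `0`,
and tending to `∞`. -/
def IsOrlicz (M : ℝ → ℝ) : Prop :=
  ContinuousOn M (Set.Ici 0) ∧ MonotoneOn M (Set.Ici 0) ∧
    ConvexOn ℝ (Set.Ici 0) M ∧ M 0 = 0 ∧ Tendsto M atTop atTop

/-- A non-degenerate Orlicz function is strictly positive on `(0,∞)`. -/
def NonDegenerate (M : ℝ → ℝ) : Prop := ∀ t : ℝ, 0 < t → 0 < M t

/-- The Luxemburg norm of a sequence. -/
noncomputable def luxNorm (M : ℝ → ℝ) (a : ℕ → ℝ) : ℝ :=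
  sInf {ρ : ℝ | 0 < ρ ∧ Summable (fun n => M (|a n| / ρ)) ∧ ∑' n, M (|a n| / ρ) ≤ 1}

/-- The Orlicz sequence space `h_M`: sequences with `Σ M(|a n|/ρ) < ∞` for every `ρ > 0`. -/
def hSpace (M : ℝ → ℝ) : Set (ℕ → ℝ) :=
  {a | ∀ ρ : ℝ, 0 < ρ → Summable fun n => M (|a n| / ρ)}

/-- `b k = inf { M(Kt)/M(t) : 0 < t ≤ M⁻¹(1/k) }`; since `M` is strictly increasing,
`t ≤ M⁻¹(1/k)` is expressed as `M t ≤ 1/k`. -/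
noncomputable def orliczB (M : ℝ → ℝ) (K : ℝ) (k : ℕ) : ℝ :=
  sInf {r : ℝ | ∃ t : ℝ, 0 < t ∧ M t ≤ 1 / k ∧ r = M (K * t) / M t}

/-- `M` is the continuous piecewise linear function with `M 0 = 0` and slope `b n` on
`(2^{-n-1}, 2^{-n})` (slope `b 0` beyond `1/2`). -/
def PiecewiseLinOrlicz (b : ℕ → ℝ) (M : ℝ → ℝ) : Prop :=
  M 0 = 0 ∧ ContinuousOn M (Set.Ici 0) ∧
    (∀ n : ℕ, ∀ t ∈ Set.Ioo ((2 : ℝ) ^ (-(n : ℤ) - 1)) ((2 : ℝ) ^ (-(n : ℤ))),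
      HasDerivAt M (b n) t) ∧
    (∀ t : ℝ, 1 / 2 < t → HasDerivAt M (b 0) t)

/-!
On the dyadic points, `2⁻¹ ^ (n + 1) * b n ≤ M (2⁻¹ ^ n) ≤ 2⁻¹ ^ n * b n`: the lower bound is
the contribution of the last linear piece, the upper one holds because the slopes decrease
towards `0`. With `K = 2 ^ q` the growth condition on `b` therefore gives
`K ^ m * M (2⁻¹ ^ (m + n)) ≤ 2 C * M (2⁻¹ ^ n)`. Since `M` is increasing, locating `λ` and `t`
between consecutive powers of `2⁻¹` turns this into the bound for `M (λ t)`, at the price of a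
factor `K ^ 2`.
-/

open Set

theorem monotoneOn_Ioc_of_monotoneOn_Icc_succ {f : ℝ → ℝ} {a : ℕ → ℝ} (ha : Antitone a)
    (ha₀ : Tendsto a atTop (𝓝 0)) (hf : ∀ k, MonotoneOn f (Icc (a (k + 1)) (a k))) :
    MonotoneOn f (Ioc 0 (a 0)) := by
  have hIcc : ∀ j, MonotoneOn f (Icc (a j) (a 0)) := by
    intro j
    induction j with
    | zero => simp
    | succ j ih =>
      have hj : a (j + 1) ≤ a j := ha j.le_succ
      have h0 : a j ≤ a 0 := ha j.zero_le
      rw [← Icc_union_Icc_eq_Icc hj h0]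
      exact (hf j).union_right ih (isGreatest_Icc hj) (isLeast_Icc h0)
  intro x hx y hy hxy
  obtain ⟨j, hj⟩ := (ha₀.eventually (gt_mem_nhds hx.1)).exists
  exact hIcc j ⟨hj.le, hx.2⟩ ⟨hj.le.trans hxy, hy.2⟩ hxy

theorem monotoneOn_Icc_of_hasDerivAt_nonneg {f : ℝ → ℝ} {a b d : ℝ}
    (hf : ContinuousOn f (Icc a b)) (hd : ∀ x ∈ Ioo a b, HasDerivAt f d x) (hd₀ : 0 ≤ d) :
    MonotoneOn f (Icc a b) :=
  monotoneOn_of_hasDerivWithinAt_nonneg (convex_Icc a b) hf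
    (fun x hx => (hd x (by rwa [interior_Icc] at hx)).hasDerivWithinAt) (fun _ _ => hd₀)

theorem MonotoneOn.le_of_continuousWithinAt {f : ℝ → ℝ} {a b : ℝ} (hab : a < b)
    (hf : MonotoneOn f (Ioc a b)) (hc : ContinuousWithinAt f (Ioi a) a) : f a ≤ f b :=
  le_of_tendsto hc.tendsto <| by
    filter_upwards [Ioc_mem_nhdsGT hab] with x hx using hf hx (right_mem_Ioc.2 hab) hx.2

theorem inv_rpow_pow_le_rpow {c p q t : ℝ} {m : ℕ} (hc : 0 < c) (hp : 0 ≤ p) (hqp : q ≤ p)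
    (ht : c⁻¹ ^ m ≤ t) (ht₁ : t ≤ 1) : ((c ^ p) ^ m)⁻¹ ≤ t ^ q :=
  calc ((c ^ p) ^ m)⁻¹ = (c⁻¹ ^ m) ^ p := by
        rw [← Real.rpow_natCast, ← Real.rpow_mul hc.le, mul_comm, Real.rpow_mul hc.le,
          Real.rpow_natCast, ← Real.inv_rpow (by positivity), inv_pow]
    _ ≤ t ^ p := Real.rpow_le_rpow (by positivity) ht hp
    _ ≤ t ^ q :=
        Real.rpow_le_rpow_of_exponent_ge ((by positivity : 0 < c⁻¹ ^ m).trans_le ht) ht₁ hqp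

theorem one_le_of_forall_div_mul_pow_le {b : ℕ → ℝ} {K C : ℝ} (hb : 0 < b 0)
    (hC : ∀ m n : ℕ, b (m + n) / b n * K ^ m ≤ C) : 1 ≤ C := by
  simpa [hb.ne'] using hC 0 0

namespace PiecewiseLinOrlicz

variable {b : ℕ → ℝ} {M : ℝ → ℝ}

theorem hasDerivAt_of_mem_Ioo (h : PiecewiseLinOrlicz b M) (k : ℕ) {x : ℝ}
    (hx : x ∈ Ioo ((2⁻¹ : ℝ) ^ (k + 1)) (2⁻¹ ^ k)) : HasDerivAt M (b k) x := by
  refine h.2.2.1 k x ?_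
  have hk : -(k : ℤ) - 1 = -((k + 1 : ℕ) : ℤ) := by push_cast; ring
  simpa only [hk, zpow_neg, zpow_natCast, inv_pow] using hx

theorem continuousOn_Icc (h : PiecewiseLinOrlicz b M) {x y : ℝ} (hx : 0 ≤ x) :
    ContinuousOn M (Icc x y) :=
  h.2.1.mono fun _ hz => hx.trans hz.1

theorem continuousWithinAt_zero (h : PiecewiseLinOrlicz b M) : ContinuousWithinAt M (Ioi 0) 0 :=
  (h.2.1 0 self_mem_Ici).mono Ioi_subset_Ici_self

theorem monotoneOn (h : PiecewiseLinOrlicz b M) (hb : ∀ n, 0 ≤ b n) : MonotoneOn M (Ioc 0 1) := by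
  simpa using monotoneOn_Ioc_of_monotoneOn_Icc_succ (a := fun k => (2⁻¹ : ℝ) ^ k)
    (pow_right_anti₀ (by norm_num) (by norm_num))
    (tendsto_pow_atTop_nhds_zero_of_lt_one (by norm_num) (by norm_num))
    fun k => monotoneOn_Icc_of_hasDerivAt_nonneg (h.continuousOn_Icc (by positivity))
      (fun _ hx => h.hasDerivAt_of_mem_Ioo k hx) (hb k)

theorem nonneg (h : PiecewiseLinOrlicz b M) (hb : ∀ n, 0 ≤ b n) {x : ℝ} (hx : 0 < x)
    (hx₁ : x ≤ 1) : 0 ≤ M x :=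
  h.1 ▸ ((h.monotoneOn hb).mono (Ioc_subset_Ioc_right hx₁)).le_of_continuousWithinAt hx
    h.continuousWithinAt_zero

theorem sub_pow_succ (h : PiecewiseLinOrlicz b M) (k : ℕ) :
    M (2⁻¹ ^ k) - M (2⁻¹ ^ (k + 1)) = 2⁻¹ ^ (k + 1) * b k := by
  have hlt : (2⁻¹ : ℝ) ^ (k + 1) < 2⁻¹ ^ k :=
    pow_lt_pow_right_of_lt_one₀ (by norm_num) (by norm_num) k.lt_succ_self
  obtain ⟨_, _, hslope⟩ := exists_hasDerivAt_eq_slope M (fun _ => b k) hlt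
    (h.continuousOn_Icc (by positivity)) fun _ hx => h.hasDerivAt_of_mem_Ioo k hx
  have hlen : (2⁻¹ : ℝ) ^ k - 2⁻¹ ^ (k + 1) = 2⁻¹ ^ (k + 1) := by ring
  rw [hslope, hlen]
  field_simp

theorem pow_succ_mul_le (h : PiecewiseLinOrlicz b M) (hb : ∀ n, 0 ≤ b n) (n : ℕ) :
    2⁻¹ ^ (n + 1) * b n ≤ M (2⁻¹ ^ n) := by
  have := h.nonneg hb (x := 2⁻¹ ^ (n + 1)) (by positivity) (pow_le_one₀ (by norm_num) (by norm_num))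
  linarith [h.sub_pow_succ n]

theorem le_mul_of_le_pow (h : PiecewiseLinOrlicz b M) (hb : Antitone b) (n : ℕ) {x : ℝ}
    (hx : 0 < x) (hxn : x ≤ 2⁻¹ ^ n) : M x ≤ x * b n := by
  -- `y ↦ y * b n - M y` has slope `b n - b (k + n) ≥ 0` on the `k`-th dyadic piece below `2⁻¹ ^ n`
  have hmono : MonotoneOn (fun y => y * b n - M y) (Ioc 0 (2⁻¹ ^ n)) := by
    simpa only [zero_add] using monotoneOn_Ioc_of_monotoneOn_Icc_succ
      (f := fun y => y * b n - M y) (a := fun k => (2⁻¹ : ℝ) ^ (k + n))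
      (fun _ _ hij => pow_le_pow_of_le_one (by norm_num) (by norm_num) (by omega))
      ((tendsto_pow_atTop_nhds_zero_of_lt_one (by norm_num) (by norm_num)).comp
        (tendsto_add_atTop_nat n))
      fun k => monotoneOn_Icc_of_hasDerivAt_nonneg
        ((continuousOn_id.mul continuousOn_const).sub (h.continuousOn_Icc (by positivity)))
        (fun _ hy => (hasDerivAt_mul_const (b n)).sub
          (h.hasDerivAt_of_mem_Ioo (k + n) (by rwa [Nat.add_right_comm] at hy)))
        (sub_nonneg.2 (hb (Nat.le_add_left n k)))
  have := (hmono.mono (Ioc_subset_Ioc_right hxn)).le_of_continuousWithinAt hx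
    ((continuousWithinAt_id.mul continuousWithinAt_const).sub h.continuousWithinAt_zero)
  simp only [h.1] at this
  linarith

theorem pow_mul_le_mul (h : PiecewiseLinOrlicz b M) (hbpos : ∀ n, 0 < b n) (hbdec : Antitone b)
    {K C : ℝ} (hK : 0 ≤ K) (hC : ∀ m n : ℕ, b (m + n) / b n * K ^ m ≤ C) (m n : ℕ) :
    K ^ m * M (2⁻¹ ^ (m + n)) ≤ 2 * C * M (2⁻¹ ^ n) := by
  have hb := fun n => (hbpos n).le
  have hC₀ : 0 ≤ C := zero_le_one.trans (one_le_of_forall_div_mul_pow_le (hbpos 0) hC)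
  calc K ^ m * M (2⁻¹ ^ (m + n))
      ≤ K ^ m * (2⁻¹ ^ (m + n) * b (m + n)) := by
        gcongr; exact h.le_mul_of_le_pow hbdec _ (by positivity) le_rfl
    _ ≤ K ^ m * (2⁻¹ ^ n * b (m + n)) := mul_le_mul_of_nonneg_left (mul_le_mul_of_nonneg_right
        (pow_le_pow_of_le_one (by norm_num) (by norm_num) (Nat.le_add_left n m)) (hb _))
        (by positivity)
    _ = b (m + n) / b n * K ^ m * (2 * (2⁻¹ ^ (n + 1) * b n)) := by
        field_simp [(hbpos n).ne']; ring
    _ ≤ C * (2 * M (2⁻¹ ^ n)) :=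
        mul_le_mul (hC m n) (by linarith [h.pow_succ_mul_le hb n])
          (mul_nonneg zero_le_two (mul_nonneg (by positivity) (hb n))) hC₀
    _ = 2 * C * M (2⁻¹ ^ n) := by ring

theorem pow_mul_le_mul_of_mem_Ioc (h : PiecewiseLinOrlicz b M) (hbpos : ∀ n, 0 < b n)
    (hbdec : Antitone b) {K C : ℝ} (hK : 1 ≤ K) (hC : ∀ m n : ℕ, b (m + n) / b n * K ^ m ≤ C)
    {l : ℝ} (hl : 0 < l) (hl₁ : l ≤ 1) (m : ℕ) :
    K ^ m * M (2⁻¹ ^ m * l) ≤ 2 * C * K * M l := by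
  have hb := fun n => (hbpos n).le
  have hC₁ := one_le_of_forall_div_mul_pow_le (hbpos 0) hC
  have hpow_le_one : ∀ k : ℕ, (2⁻¹ : ℝ) ^ k ≤ 1 := fun k => pow_le_one₀ (by norm_num) (by norm_num)
  obtain ⟨n, hnl, hln⟩ := exists_nat_pow_near_of_lt_one hl hl₁ (by norm_num : (0 : ℝ) < 2⁻¹)
    (by norm_num)
  cases m with
  | zero =>
    rw [pow_zero, pow_zero, one_mul, one_mul]
    exact le_mul_of_one_le_left (h.nonneg hb hl hl₁) (by nlinarith)
  | succ j =>
    calc K ^ (j + 1) * M (2⁻¹ ^ (j + 1) * l)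
        ≤ K ^ (j + 1) * M (2⁻¹ ^ (j + (n + 1))) := by
          refine mul_le_mul_of_nonneg_left ?_ (by positivity)
          refine h.monotoneOn hb ⟨by positivity, ?_⟩ ⟨by positivity, hpow_le_one _⟩ ?_
          · exact mul_le_one₀ (hpow_le_one _) hl.le hl₁
          · rw [show j + (n + 1) = (j + 1) + n by ring, pow_add _ (j + 1) n]
            exact mul_le_mul_of_nonneg_left hln (by positivity)
      _ = K * (K ^ j * M (2⁻¹ ^ (j + (n + 1)))) := by ring
      _ ≤ K * (2 * C * M l) := by
          refine mul_le_mul_of_nonneg_left ?_ (by positivity)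
          refine (h.pow_mul_le_mul hbpos hbdec (by positivity) hC j (n + 1)).trans ?_
          exact mul_le_mul_of_nonneg_left
            (h.monotoneOn hb ⟨by positivity, hpow_le_one _⟩ ⟨hl, hl₁⟩ hnl.le) (by linarith)
      _ = 2 * C * K * M l := by ring

theorem le_mul_mul_rpow (h : PiecewiseLinOrlicz b M) (hbpos : ∀ n, 0 < b n) (hbdec : Antitone b)
    {p q C : ℝ} (hp : 0 ≤ p) (hqp : q ≤ p)
    (hC : ∀ m n : ℕ, b (m + n) / b n * ((2 : ℝ) ^ p) ^ m ≤ C) {l t : ℝ} (hl : 0 < l) (hl₁ : l ≤ 1)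
    (ht : 0 < t) (ht₁ : t ≤ 1) : M (l * t) ≤ 2 * C * ((2 : ℝ) ^ p) ^ 2 * M l * t ^ q := by
  set K := (2 : ℝ) ^ p
  have hb := fun n => (hbpos n).le
  have hK : 1 ≤ K := Real.one_le_rpow (by norm_num) hp
  have hC₀ : 0 ≤ C := zero_le_one.trans (one_le_of_forall_div_mul_pow_le (hbpos 0) hC)
  have hMl := h.nonneg hb hl hl₁
  obtain ⟨m, hmt, htm⟩ := exists_nat_pow_near_of_lt_one ht ht₁ (by norm_num : (0 : ℝ) < 2⁻¹)
    (by norm_num)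
  have hscale := h.pow_mul_le_mul_of_mem_Ioc hbpos hbdec hK hC hl hl₁ m
  have htq : (K ^ (m + 1))⁻¹ ≤ t ^ q := inv_rpow_pow_le_rpow two_pos hp hqp hmt.le ht₁
  calc M (l * t) ≤ M (2⁻¹ ^ m * l) := by
        refine h.monotoneOn hb ⟨by positivity, mul_le_one₀ hl₁ ht.le ht₁⟩ ⟨by positivity, ?_⟩ ?_
        · exact mul_le_one₀ (pow_le_one₀ (by norm_num) (by norm_num)) hl.le hl₁
        · rw [mul_comm l]; exact mul_le_mul_of_nonneg_right htm hl.le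
    _ ≤ 2 * C * K * M l / K ^ m := by rw [le_div_iff₀ (by positivity)]; linarith
    _ = 2 * C * K ^ 2 * M l * (K ^ (m + 1))⁻¹ := by field_simp; ring
    _ ≤ 2 * C * K ^ 2 * M l * t ^ q := mul_le_mul_of_nonneg_left htq (by positivity)

end PiecewiseLinOrlicz

/-- For the piecewise linear Orlicz function `M` built from a decreasing
positive sequence `(b n)` with `sup_{m,n} (b_{m+n}/b_n) K^m < ∞` for all `K`, one has
`sup_{0<λ,t≤1} M(λt)/(M(λ) t^q) < ∞` for every `q < ∞` (so `h_M` is `c₀`-saturated). -/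
theorem piecewiseLinear_sat_condition (b : ℕ → ℝ) (hbpos : ∀ n, 0 < b n)
    (hbdec : Antitone b)
    (hsup : ∀ K : ℝ, 0 < K → ∃ C : ℝ, ∀ m n : ℕ, b (m + n) / b n * K ^ m ≤ C)
    (M : ℝ → ℝ) (hPWL : PiecewiseLinOrlicz b M) :
    ∀ q : ℝ, ∃ C : ℝ, ∀ l t : ℝ, 0 < l → l ≤ 1 → 0 < t → t ≤ 1 →
      M (l * t) ≤ C * M l * t ^ q := by
  intro q
  obtain ⟨C, hC⟩ := hsup ((2 : ℝ) ^ max q 0) (by positivity)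
  exact ⟨_, fun l t hl hl₁ ht ht₁ => hPWL.le_mul_mul_rpow hbpos hbdec (le_max_right q 0)
    (le_max_left q 0) hC hl hl₁ ht ht₁⟩
end

section
/- Let α_0 = α_1 = α_2 = 1 and α_j = (e/j)^j for j ≥ 3. Let (c_j)_{j≥0} be a decreasing sequence of strictly positive reals with c_{j+1} ≤ α_j·α_{2j²}·c_j for all j ≥ 0. Set s_n = n(n+1)/2, and define b_0 = c_0, b_1 = c_1, and b_{s_n + k} = c_{n+1}/α_{n+1−k} for n ≥ 1 and 1 ≤ k ≤ n+1. Then (b_j)_{j≥0} is a decreasing sequence. -/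
open Filter Topology

/-- `α_0 = α_1 = α_2 = 1` and `α_j = (e/j)^j` for `j ≥ 3`. -/
noncomputable def alphaSeq : ℕ → ℝ := fun j => if j ≤ 2 then 1 else (Real.exp 1 / j) ^ j

/-- `s_n = 1 + 2 + ⋯ + n = n(n+1)/2`. -/
def sTri (n : ℕ) : ℕ := n * (n + 1) / 2

/-- The sequence `(b j)` of the counterexample: `b 0 = c 0`, `b 1 = c 1`, and
`b (s n + k) = c (n+1) / α (n+1-k)` for `n ≥ 1`, `1 ≤ k ≤ n+1` (this determines `b`,
since every integer `≥ 2` is uniquely of this form). -/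
def CounterB (c b : ℕ → ℝ) : Prop :=
  b 0 = c 0 ∧ b 1 = c 1 ∧
    ∀ n k : ℕ, 1 ≤ n → 1 ≤ k → k ≤ n + 1 →
      b (sTri n + k) = c (n + 1) / alphaSeq (n + 1 - k)

lemma alphaSeq_pos (j : ℕ) : 0 < alphaSeq j := by
  unfold alphaSeq
  split
  · norm_num
  · have hj : 3 ≤ j := by omega
    have : (0:ℝ) < j := by exact_mod_cast by omega
    exact pow_pos (div_pos (Real.exp_pos 1) this) j

lemma alphaSeq_le_one (j : ℕ) : alphaSeq j ≤ 1 := by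
  unfold alphaSeq
  split
  · norm_num
  · have hj : 3 ≤ j := by omega
    have hj' : (3:ℝ) ≤ j := by exact_mod_cast hj
    have he : Real.exp 1 < 3 := by
      have := Real.exp_one_lt_d9; linarith
    have h0 : (0:ℝ) < j := by linarith
    apply pow_le_one₀
    · positivity
    · rw [div_le_one h0]; linarith

lemma alphaSeq_succ_le (j : ℕ) : alphaSeq (j + 1) ≤ alphaSeq j := by
  rcases Nat.lt_or_ge j 3 with h | h
  · rcases Nat.lt_or_ge (j+1) 3 with h' | h'
    · unfold alphaSeq
      rw [if_pos (by omega), if_pos (by omega)]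
    · have : alphaSeq j = 1 := by unfold alphaSeq; rw [if_pos (by omega)]
      rw [this]; exact alphaSeq_le_one _
  · have he : Real.exp 1 < 3 := by
      have := Real.exp_one_lt_d9; linarith
    have hj' : (3:ℝ) ≤ j := by exact_mod_cast h
    have h0 : (0:ℝ) < j := by linarith
    have h0' : (0:ℝ) < (j:ℝ) + 1 := by linarith
    have hle1 : Real.exp 1 / j ≤ 1 := by
      rw [div_le_one h0]; linarith
    have hnn : (0:ℝ) ≤ Real.exp 1 / ((j:ℝ)+1) := by positivity
    unfold alphaSeq
    rw [if_neg (by omega), if_neg (by omega)]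
    push_cast
    calc (Real.exp 1 / ((j:ℝ)+1)) ^ (j+1)
        ≤ (Real.exp 1 / j) ^ (j+1) := by
          apply pow_le_pow_left₀ hnn
          apply div_le_div_of_nonneg_left (Real.exp_pos 1).le h0
          linarith
      _ ≤ (Real.exp 1 / j) ^ j := by
          apply pow_le_pow_of_le_one (by positivity) hle1 (by omega)

lemma alphaSeq_anti : Antitone alphaSeq :=
  antitone_nat_of_succ_le alphaSeq_succ_le

lemma sTri_succ (n : ℕ) : sTri (n + 1) = sTri n + (n + 1) := by
  unfold sTri
  have h : (n+1) * (n+1+1) = n*(n+1) + 2*(n+1) := by ring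
  omega

lemma rep (m : ℕ) (hm : 2 ≤ m) :
    ∃ n k, 1 ≤ n ∧ 1 ≤ k ∧ k ≤ n + 1 ∧ m = sTri n + k := by
  induction m with
  | zero => omega
  | succ m ih =>
    rcases Nat.lt_or_ge m 2 with h | h
    · have hm1 : m = 1 := by omega
      refine ⟨1, 1, le_refl 1, le_refl 1, by omega, ?_⟩
      have : sTri 1 = 1 := by decide
      omega
    · obtain ⟨n, k, hn, hk1, hk2, heq⟩ := ih h
      rcases Nat.lt_or_ge k (n+1) with hk | hk
      · exact ⟨n, k+1, hn, by omega, by omega, by omega⟩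
      · have hkn : k = n + 1 := by omega
        refine ⟨n+1, 1, by omega, le_refl 1, by omega, ?_⟩
        have := sTri_succ n
        omega

/-- If `(c j)` is a decreasing sequence of strictly positive reals with
`c (j+1) ≤ α j · α (2j²) · c j`, then the sequence `(b j)` defined by
`b (s_n + k) = c (n+1)/α (n+1-k)` is decreasing. -/
theorem counterB_antitone (c b : ℕ → ℝ) (hcpos : ∀ j, 0 < c j) (hcdec : Antitone c)
    (hcrec : ∀ j : ℕ, c (j + 1) ≤ alphaSeq j * alphaSeq (2 * j ^ 2) * c j)
    (hb : CounterB c b) :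
    Antitone b := by
  obtain ⟨hb0, hb1, hbs⟩ := hb
  apply antitone_nat_of_succ_le
  intro m
  rcases Nat.lt_or_ge m 2 with hm | hm
  · interval_cases m
    · rw [hb0, hb1]; exact hcdec (by norm_num)
    · have h2 : b 2 = c 2 / alphaSeq 1 := by
        have := hbs 1 1 le_rfl le_rfl (by norm_num)
        simpa [sTri] using this
      have ha1 : alphaSeq 1 = 1 := by unfold alphaSeq; norm_num
      rw [hb1, h2, ha1, div_one]
      exact hcdec (by norm_num)
  · obtain ⟨n, k, hn, hk1, hk2, heq⟩ := rep m hm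
    have hbm : b m = c (n+1) / alphaSeq (n+1-k) := heq ▸ hbs n k hn hk1 hk2
    rcases Nat.lt_or_ge k (n+1) with hk | hk
    · -- within the block: m+1 = sTri n + (k+1)
      have hbm1 : b (m+1) = c (n+1) / alphaSeq (n+1-(k+1)) := by
        have hm1 : m + 1 = sTri n + (k+1) := by omega
        rw [hm1]
        exact hbs n (k+1) hn (by omega) (by omega)
      rw [hbm, hbm1]
      have hα : alphaSeq (n+1-k) ≤ alphaSeq (n+1-(k+1)) := alphaSeq_anti (by omega)
      have hp1 : 0 < alphaSeq (n+1-(k+1)) := alphaSeq_pos _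
      have hp2 : 0 < alphaSeq (n+1-k) := alphaSeq_pos _
      rw [div_le_div_iff₀ hp1 hp2]
      exact mul_le_mul_of_nonneg_left hα (hcpos (n+1)).le
    · -- boundary: k = n+1, m = sTri (n+1), m+1 = sTri (n+1) + 1
      have hkn : k = n + 1 := by omega
      have hbm' : b m = c (n+1) := by
        rw [hbm, hkn]
        simp [alphaSeq]
      have hm1eq : m + 1 = sTri (n+1) + 1 := by
        have := sTri_succ n
        omega
      have hbm1 : b (m+1) = c (n+2) / alphaSeq (n+1) := by
        have := hbs (n+1) 1 (by omega) le_rfl (by omega)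
        rw [hm1eq]
        simpa using this
      rw [hbm', hbm1]
      have hp : 0 < alphaSeq (n+1) := alphaSeq_pos _
      rw [div_le_iff₀ hp]
      have h1 := hcrec (n+1)
      have h2 : alphaSeq (2 * (n+1)^2) ≤ 1 := alphaSeq_le_one _
      have h3 : 0 < alphaSeq (n+1) := alphaSeq_pos _
      nlinarith [h1, mul_nonneg (mul_nonneg h3.le (hcpos (n+1)).le) (sub_nonneg.mpr h2)]
end

section
/- Let E be a Banach space with a basis (e_n) that is monotone with respect to a norm |||·|||, and suppose for every x = Σ a_n e_n there exists m with |||x||| = |||Σ_{n=1}^m a_n e_n|||. For each n let W_n be a finite subset of the unit ball of (E,|||·|||)' with (1+ε_n)^{-1}|||x||| ≤ max_{w∈W_n}|w(x)| ≤ |||x||| for all x in span{e_1,…,e_n}, where 1 > η_n > ε_n > 0 and η_n, ε_n → 0. Define ρ(x) = sup_n (1+η_n)·max_{1≤j≤n} max_{w∈W_j} |⟨P_j x, w⟩|. Then |||x||| ≤ ρ(x) ≤ 2|||x||| for all x ∈ E, so ρ is an equivalent norm, and for every x the supremum defining ρ(x) is attained. -/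
open Filter Topology

private lemma rbiSup_le {ι : Sort*} {p : ι → Prop} {f : ι → ℝ} {B : ℝ}
    (hB : 0 ≤ B) (h : ∀ i, p i → f i ≤ B) : (⨆ i, ⨆ _ : p i, f i) ≤ B :=
  Real.iSup_le (fun i => Real.iSup_le (fun hi => h i hi) hB) hB

private lemma rbiSup_nonneg {ι : Sort*} {p : ι → Prop} {f : ι → ℝ}
    (h : ∀ i, p i → 0 ≤ f i) : 0 ≤ ⨆ i, ⨆ _ : p i, f i :=
  Real.iSup_nonneg fun i => Real.iSup_nonneg fun hi => h i hi

private lemma le_rbiSup {ι : Sort*} {p : ι → Prop} {f : ι → ℝ} {B : ℝ}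
    (h : ∀ i, p i → f i ≤ B) {i : ι} (hi : p i) : f i ≤ ⨆ i, ⨆ _ : p i, f i := by
  have hbdd : BddAbove (Set.range fun i => ⨆ _ : p i, f i) := by
    refine ⟨max B 0, ?_⟩
    rintro y ⟨j, rfl⟩
    exact Real.iSup_le (fun hj => (h j hj).trans (le_max_left _ _)) (le_max_right _ _)
  calc f i = ⨆ _ : p i, f i := (ciSup_pos (f := fun _ : p i => f i) hi).symm
  _ ≤ _ := le_ciSup hbdd i

private lemma rbiSup_finset_eq_sup' {ι : Type*} {s : Finset ι} (hs : s.Nonempty) {f : ι → ℝ}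
    (h0 : ∀ i ∈ s, 0 ≤ f i) : (⨆ i ∈ s, f i) = s.sup' hs f := by
  obtain ⟨j0, hj0⟩ := hs
  apply le_antisymm
  · exact rbiSup_le ((h0 j0 hj0).trans (Finset.le_sup' f hj0)) (fun i hi => Finset.le_sup' f hi)
  · exact Finset.sup'_le _ _ fun i hi =>
      le_rbiSup (p := (· ∈ s)) (f := f) (B := s.sup' ⟨j0, hj0⟩ f)
        (fun k hk => Finset.le_sup' f hk) hi

private lemma aux_attain (η : ℕ → ℝ) (hη : ∀ n, 0 < η n) (hη1 : ∀ n, η n < 1)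
    (hη0 : Tendsto η atTop (𝓝 0))
    (A : ℕ → ℝ) (hA0 : ∀ j, 0 ≤ A j) (B : ℝ) (hAB : ∀ j, A j ≤ B)
    (S : ℝ) (hS : S = ⨆ n, (1 + η n) * ⨆ j ∈ Finset.Icc 1 n, A j)
    (hBS : B < S) :
    ∃ n, ∃ j ∈ Finset.Icc 1 n, S = (1 + η n) * A j := by
  set g : ℕ → ℝ := fun n => ⨆ j ∈ Finset.Icc 1 n, A j with hg
  set T : ℕ → ℝ := fun n => (1 + η n) * g n with hT
  have hB0 : 0 ≤ B := (hA0 0).trans (hAB 0)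
  have hgB : ∀ n, g n ≤ B := fun n => rbiSup_le hB0 fun j _ => hAB j
  have hg0 : ∀ n, 0 ≤ g n := fun n => rbiSup_nonneg fun j _ => hA0 j
  have hST : S = ⨆ n, T n := hS
  have hTbdd : BddAbove (Set.range T) := by
    refine ⟨2 * B, ?_⟩
    rintro y ⟨n, rfl⟩
    have h1 : (1 : ℝ) + η n ≤ 2 := by linarith [hη1 n]
    calc T n = (1 + η n) * g n := rfl
    _ ≤ 2 * B := mul_le_mul h1 (hgB n) (hg0 n) (by norm_num)
  have hTS : ∀ n, T n ≤ S := fun n => hST ▸ le_ciSup hTbdd n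
  have hS0 : 0 < S := lt_of_le_of_lt hB0 hBS
  have hδ : (0:ℝ) < (S - B) / (2 * (B + 1)) := by
    apply div_pos <;> linarith
  have hkey : (S - B) / (2 * (B + 1)) * (B + 1) = (S - B) / 2 := by
    field_simp
  obtain ⟨n0, hn0⟩ := eventually_atTop.mp (hη0.eventually_lt_const hδ)
  have htail : ∀ n, n0 ≤ n → T n ≤ (S + B) / 2 := by
    intro n hn
    have hηn := hn0 n hn
    have h1 : T n ≤ (1 + η n) * B :=
      mul_le_mul_of_nonneg_left (hgB n) (by linarith [hη n])
    have h2 : η n * B ≤ (S - B) / (2 * (B + 1)) * (B + 1) := by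
      apply mul_le_mul (le_of_lt hηn) (by linarith) hB0 (le_of_lt hδ)
    nlinarith
  have hmid : (S + B) / 2 < S := by linarith
  obtain ⟨n', hn'⟩ := exists_lt_of_lt_ciSup (hST ▸ hmid)
  rw [← hST] at hn'
  have hn'lt : n' < n0 := by
    by_contra h
    push_neg at h
    exact absurd hn' (not_lt.2 (htail n' h))
  have hne : n' ∈ Finset.range n0 := Finset.mem_range.2 hn'lt
  set M := (Finset.range n0).sup' ⟨n', hne⟩ T with hM
  have hMS : M ≤ S := Finset.sup'_le _ _ fun n _ => hTS n
  have hSM : S ≤ M := by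
    rw [hST]
    apply ciSup_le
    intro n
    by_cases h : n < n0
    · exact Finset.le_sup' T (Finset.mem_range.2 h)
    · push_neg at h
      calc T n ≤ (S + B) / 2 := htail n h
      _ ≤ T n' := le_of_lt hn'
      _ ≤ M := Finset.le_sup' T hne
  obtain ⟨m, _, hm⟩ := Finset.exists_mem_eq_sup' ⟨n', hne⟩ T
  have hSm : S = T m := (le_antisymm hSM hMS).trans hm
  have hgm : 0 < g m := by
    by_contra h
    push_neg at h
    have : T m ≤ 0 := mul_nonpos_of_nonneg_of_nonpos (by linarith [hη m]) h
    linarith [hSm ▸ hS0]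
  have hm1 : 1 ≤ m := by
    by_contra h
    push_neg at h
    interval_cases m
    have : g 0 ≤ 0 := rbiSup_le le_rfl (fun j hj => by simp at hj)
    linarith
  have hicc : (Finset.Icc 1 m).Nonempty := ⟨1, Finset.mem_Icc.2 ⟨le_refl 1, hm1⟩⟩
  have hgm' : g m = (Finset.Icc 1 m).sup' hicc A :=
    rbiSup_finset_eq_sup' hicc (fun j _ => hA0 j)
  obtain ⟨j, hj, hjA⟩ := Finset.exists_mem_eq_sup' hicc A
  refine ⟨m, j, hj, ?_⟩
  calc S = T m := hSm
  _ = (1 + η m) * g m := rfl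
  _ = (1 + η m) * A j := by rw [hgm', hjA]
/-- Let `(e n)` be a basis of `E` (with coordinate functionals `f n` and
basis projections `P k`) which is monotone with respect to a norm `N` such that every
`x` satisfies `N x = N (P m x)` for some `m`.  Given finite sets `W n` in the unit ball
of the `N`-dual which `(1+ε n)`-norm the span of `e_0,…,e_{n-1}`, the function
`ρ x = sup_n (1+η n)·max_{1≤j≤n} max_{w∈W j} |⟨P j x, w⟩|` satisfies
`N x ≤ ρ x ≤ 2 N x`, so `ρ` is an equivalent norm, and the supremum defining `ρ x` is
attained for every `x`. -/
theorem rho_equiv_and_attained {E : Type*} [NormedAddCommGroup E] [NormedSpace ℝ E]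
    [CompleteSpace E]
    (e : ℕ → E) (f : ℕ → E →L[ℝ] ℝ)
    (hbi : ∀ m n, f m (e n) = if m = n then 1 else 0)
    (hexp : ∀ x : E,
      Tendsto (fun k => ∑ n ∈ Finset.range k, f n x • e n) atTop (𝓝 x))
    (P : ℕ → E → E) (hP : ∀ k x, P k x = ∑ n ∈ Finset.range k, f n x • e n)
    (N : E → ℝ)
    (hNadd : ∀ x y, N (x + y) ≤ N x + N y)
    (hNsmul : ∀ (r : ℝ) (x : E), N (r • x) = |r| * N x)
    (hNequiv : ∃ c > 0, ∃ C > 0, ∀ x, c * ‖x‖ ≤ N x ∧ N x ≤ C * ‖x‖)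
    (hmono : ∀ (x : E) (k : ℕ), N (P k x) ≤ N (P (k + 1) x))
    (hattain : ∀ x : E, ∃ m, N x = N (P m x))
    (η ε : ℕ → ℝ) (hηε : ∀ n, 0 < ε n ∧ ε n < η n ∧ η n < 1)
    (hη0 : Tendsto η atTop (𝓝 0)) (hε0 : Tendsto ε atTop (𝓝 0))
    (W : ℕ → Finset (E →L[ℝ] ℝ))
    (hWball : ∀ n, ∀ w ∈ W n, ∀ x : E, |w x| ≤ N x)
    (hWnorm : ∀ n : ℕ, ∀ x ∈ Submodule.span ℝ (e '' Set.Iio n),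
      ∃ w ∈ W n, (1 + ε n)⁻¹ * N x ≤ |w x|)
    (ρ : E → ℝ)
    (hρ : ∀ x, ρ x =
      ⨆ n : ℕ, (1 + η n) * ⨆ j ∈ Finset.Icc 1 n, ⨆ w ∈ W j, |w (P j x)|) :
    (∀ x : E, N x ≤ ρ x ∧ ρ x ≤ 2 * N x) ∧
    (∀ x : E, ∃ n : ℕ, ∃ j ∈ Finset.Icc 1 n, ∃ w ∈ W j,
      ρ x = (1 + η n) * |w (P j x)|) := by
  obtain ⟨c, hc, C, hC, hcC⟩ := hNequiv
  have hNnn : ∀ x : E, 0 ≤ N x := fun x =>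
    le_trans (by positivity) (hcC x).1
  have hN0 : N 0 = 0 := by
    have := hNsmul 0 0
    simpa using this
  have hlip : ∀ a b : E, N a - N b ≤ C * ‖a - b‖ := by
    intro a b
    have h1 : N a ≤ N (a - b) + N b := by
      have := hNadd (a - b) b
      simpa using this
    have h2 : N (a - b) ≤ C * ‖a - b‖ := (hcC _).2
    linarith
  have hPtend : ∀ x : E, Tendsto (fun j => P j x) atTop (𝓝 x) := by
    intro x
    have h := hexp x
    have : (fun j => P j x) = fun k => ∑ n ∈ Finset.range k, f n x • e n := by
      funext k; exact hP k x
    rw [this]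
    exact h
  have hNtend : ∀ x : E, Tendsto (fun j => N (P j x)) atTop (𝓝 (N x)) := by
    intro x
    rw [tendsto_iff_dist_tendsto_zero]
    have hn : Tendsto (fun j => ‖P j x - x‖) atTop (𝓝 0) :=
      tendsto_iff_norm_sub_tendsto_zero.mp (hPtend x)
    have h0 : Tendsto (fun j => C * ‖P j x - x‖) atTop (𝓝 0) := by
      simpa using hn.const_mul C
    refine squeeze_zero (fun j => dist_nonneg) (fun j => ?_) h0
    rw [Real.dist_eq]
    refine abs_sub_le_iff.mpr ⟨hlip _ _, ?_⟩
    have := hlip x (P j x)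
    rw [norm_sub_rev] at this
    exact this
  have hmonoN : ∀ x : E, Monotone fun k => N (P k x) :=
    fun x => monotone_nat_of_le_succ (hmono x)
  have hPle : ∀ (x : E) (k : ℕ), N (P k x) ≤ N x := fun x k =>
    ge_of_tendsto (hNtend x) (eventually_atTop.2 ⟨k, fun j hj => hmonoN x hj⟩)
  have hPmem : ∀ (x : E) (j : ℕ), P j x ∈ Submodule.span ℝ (e '' Set.Iio j) := by
    intro x j
    rw [hP]
    exact Submodule.sum_mem _ fun n hn => Submodule.smul_mem _ _
      (Submodule.subset_span ⟨n, Finset.mem_range.mp hn, rfl⟩)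
  have hWne : ∀ j, (W j).Nonempty := by
    intro j
    obtain ⟨w, hw, -⟩ := hWnorm j 0 (Submodule.zero_mem _)
    exact ⟨w, hw⟩
  have habs : ∀ (x : E) (j : ℕ), ∀ w ∈ W j, |w (P j x)| ≤ N x :=
    fun x j w hw => (hWball j w hw (P j x)).trans (hPle x j)
  have hAnn : ∀ (x : E) (j : ℕ), 0 ≤ ⨆ w ∈ W j, |w (P j x)| :=
    fun x j => rbiSup_nonneg fun w _ => abs_nonneg _
  have hAle : ∀ (x : E) (j : ℕ), (⨆ w ∈ W j, |w (P j x)|) ≤ N x :=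
    fun x j => rbiSup_le (hNnn x) fun w hw => habs x j w hw
  have hterm : ∀ (x : E) (n : ℕ),
      (1 + η n) * (⨆ j ∈ Finset.Icc 1 n, ⨆ w ∈ W j, |w (P j x)|) ≤ 2 * N x := by
    intro x n
    have hg1 : (⨆ j ∈ Finset.Icc 1 n, ⨆ w ∈ W j, |w (P j x)|) ≤ N x :=
      rbiSup_le (hNnn x) fun j _ => hAle x j
    have hg0 : 0 ≤ ⨆ j ∈ Finset.Icc 1 n, ⨆ w ∈ W j, |w (P j x)| :=
      rbiSup_nonneg fun j _ => hAnn x j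
    have h1 : (1 : ℝ) + η n ≤ 2 := by linarith [(hηε n).2.2]
    exact mul_le_mul h1 hg1 hg0 (by norm_num)
  have hbdd : ∀ x : E, BddAbove (Set.range fun n =>
      (1 + η n) * ⨆ j ∈ Finset.Icc 1 n, ⨆ w ∈ W j, |w (P j x)|) := by
    intro x
    refine ⟨2 * N x, ?_⟩
    rintro y ⟨n, rfl⟩
    exact hterm x n
  -- strict lower bound when N x > 0
  have hstrict : ∀ x : E, 0 < N x → N x < ρ x := by
    intro x hx
    obtain ⟨m, hm⟩ := hattain x
    have hm1 : 1 ≤ m := by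
      rcases Nat.eq_zero_or_pos m with rfl | h
      · exfalso
        have hz : P 0 x = 0 := by rw [hP]; simp
        rw [hz, hN0] at hm
        linarith
      · exact h
    obtain ⟨w, hw, hwge⟩ := hWnorm m (P m x) (hPmem x m)
    obtain ⟨hε1, hε2, hε3⟩ := hηε m
    have hεpos : (0:ℝ) < 1 + ε m := by linarith
    have hone : (1:ℝ) < (1 + η m) * (1 + ε m)⁻¹ := by
      rw [← div_eq_mul_inv, lt_div_iff₀ hεpos]
      linarith
    have hPpos : 0 < N (P m x) := hm ▸ hx
    have h1 : N x < (1 + η m) * |w (P m x)| := by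
      calc N x = N (P m x) := hm
      _ < (1 + η m) * (1 + ε m)⁻¹ * N (P m x) := lt_mul_of_one_lt_left hPpos hone
      _ = (1 + η m) * ((1 + ε m)⁻¹ * N (P m x)) := by ring
      _ ≤ (1 + η m) * |w (P m x)| :=
          mul_le_mul_of_nonneg_left hwge (by linarith)
    have h2 : |w (P m x)| ≤ ⨆ w' ∈ W m, |w' (P m x)| :=
      le_rbiSup (B := N x) (fun w' hw' => habs x m w' hw') hw
    have h3 : (⨆ w' ∈ W m, |w' (P m x)|) ≤
        ⨆ j ∈ Finset.Icc 1 m, ⨆ w' ∈ W j, |w' (P j x)| :=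
      le_rbiSup (B := N x) (fun j _ => hAle x j) (Finset.mem_Icc.2 ⟨hm1, le_refl m⟩)
    have h4 : (1 + η m) * (⨆ j ∈ Finset.Icc 1 m, ⨆ w' ∈ W j, |w' (P j x)|) ≤ ρ x := by
      rw [hρ x]
      exact le_ciSup (hbdd x) m
    have h5 : (1 + η m) * |w (P m x)| ≤
        (1 + η m) * (⨆ j ∈ Finset.Icc 1 m, ⨆ w' ∈ W j, |w' (P j x)|) :=
      mul_le_mul_of_nonneg_left (h2.trans h3) (by linarith)
    linarith
  have hρnn : ∀ x : E, 0 ≤ ρ x := by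
    intro x
    rw [hρ x]
    refine Real.iSup_nonneg fun n => mul_nonneg ?_ (rbiSup_nonneg fun j _ => hAnn x j)
    linarith [(hηε n).1, (hηε n).2.1]
  constructor
  · intro x
    constructor
    · rcases le_or_gt (N x) 0 with hx | hx
      · exact hx.trans (hρnn x)
      · exact (hstrict x hx).le
    · rw [hρ x]
      exact Real.iSup_le (hterm x) (by linarith [hNnn x])
  · intro x
    rcases le_or_gt (N x) 0 with hx | hx
    · -- degenerate case : N x = 0, everything vanishes
      have hNx : N x = 0 := le_antisymm hx (hNnn x)
      have hz : ∀ (j : ℕ), ∀ w ∈ W j, |w (P j x)| = 0 := by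
        intro j w hw
        have := habs x j w hw
        have := abs_nonneg (w (P j x))
        linarith [hNx ▸ habs x j w hw]
      have hρ0 : ρ x = 0 := by
        refine le_antisymm ?_ (hρnn x)
        rw [hρ x]
        refine Real.iSup_le (fun n => ?_) le_rfl
        have hg : (⨆ j ∈ Finset.Icc 1 n, ⨆ w ∈ W j, |w (P j x)|) ≤ 0 :=
          rbiSup_le le_rfl fun j _ => rbiSup_le le_rfl fun w hw => (hz j w hw).le
        exact mul_nonpos_of_nonneg_of_nonpos (by linarith [(hηε n).1, (hηε n).2.1]) hg
      obtain ⟨w, hw⟩ := hWne 1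
      refine ⟨1, 1, Finset.mem_Icc.2 ⟨le_refl 1, le_refl 1⟩, w, hw, ?_⟩
      rw [hρ0, hz 1 w hw, mul_zero]
    · -- main case
      obtain ⟨n, j, hj, heq⟩ := aux_attain η (fun n => lt_trans (hηε n).1 (hηε n).2.1)
        (fun n => (hηε n).2.2) hη0
        (fun j => ⨆ w ∈ W j, |w (P j x)|) (hAnn x) (N x) (hAle x)
        (ρ x) (hρ x) (hstrict x hx)
      have hA' : (⨆ w ∈ W j, |w (P j x)|) =
          (W j).sup' (hWne j) (fun w => |w (P j x)|) :=
        rbiSup_finset_eq_sup' (hWne j) (fun _ _ => abs_nonneg _)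
      obtain ⟨w, hw, hwA⟩ := Finset.exists_mem_eq_sup' (hWne j) (fun w => |w (P j x)|)
      exact ⟨n, j, hj, w, hw, by rw [heq, hA', hwA]⟩
end
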